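/- For m ≥ 3 and 0 < k ≤ ⌊(m−1)/2⌋, the Nimber of the Toggle position P_{0,1}(m,k) belongs to {0, 1}, and the Nimber of the Toggle position P_{1,0}(m,k) belongs to {0, 1}. -/
import Mathlib


namespace Toggle

variable {V : Type*} [Fintype V] [DecidableEq V]

/-- The closed neighborhood `N[v]` of a vertex as a `Finset`. -/
def closedNbhd (G : SimpleGraph V) [DecidableRel G.Adj] (v : V) : Finset V :=
  insert v (G.neighborFinset v)

/-- The result of a Toggle move at `v`: flip the weight of every vertex in `N[v]`. -/
def move (G : SimpleGraph V) [DecidableRel G.Adj] (ω : V → Bool) (v : V) : V → Bool :=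
  fun u => if u ∈ closedNbhd G v then !(ω u) else ω u

/-- Total weight of a position. -/
def weight (ω : V → Bool) : ℕ := (Finset.univ.filter (fun u => ω u = true)).card

/-- Weight of a position over the closed neighborhood of `v`. -/
def nbhdWeight (G : SimpleGraph V) [DecidableRel G.Adj] (ω : V → Bool) (v : V) : ℕ :=
  ((closedNbhd G v).filter (fun u => ω u = true)).card

/-- A Toggle move at `v` is legal iff `ω v = 1` and the move strictly decreases the
weight over `N[v]`. -/
def IsLegal (G : SimpleGraph V) [DecidableRel G.Adj] (ω : V → Bool) (v : V) : Prop :=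
  ω v = true ∧ nbhdWeight G (move G ω v) v < nbhdWeight G ω v

instance (G : SimpleGraph V) [DecidableRel G.Adj] (ω : V → Bool) (v : V) :
    Decidable (IsLegal G ω v) :=
  inferInstanceAs (Decidable (ω v = true ∧ nbhdWeight G (move G ω v) v < nbhdWeight G ω v))

theorem weight_move_lt (G : SimpleGraph V) [DecidableRel G.Adj] {ω : V → Bool} {v : V}
    (h : IsLegal G ω v) : weight (move G ω v) < weight ω := by
  have key : ∀ ψ : V → Bool,
      weight ψ = ((closedNbhd G v).filter (fun u => ψ u = true)).card
        + ((Finset.univ \ closedNbhd G v).filter (fun u => ψ u = true)).card := by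
    intro ψ
    rw [weight, ← Finset.card_union_of_disjoint
      (Finset.disjoint_filter_filter Finset.disjoint_sdiff)]
    congr 1
    ext u
    simp only [Finset.mem_filter, Finset.mem_union, Finset.mem_sdiff, Finset.mem_univ,
      true_and]
    tauto
  have hout : ((Finset.univ \ closedNbhd G v).filter (fun u => move G ω v u = true))
      = ((Finset.univ \ closedNbhd G v).filter (fun u => ω u = true)) := by
    apply Finset.filter_congr
    intro u hu
    rw [Finset.mem_sdiff] at hu
    simp [move, hu.2]
  have h2 := h.2
  rw [key (move G ω v), key ω, hout]
  unfold nbhdWeight at h2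
  omega

/-- Minimal excludant of a finite set of naturals. -/
noncomputable def mex (s : Finset ℕ) : ℕ := sInf {n : ℕ | n ∉ s}

/-- The Nimber (Grundy value) of a Toggle position. -/
noncomputable def grundy (G : SimpleGraph V) [DecidableRel G.Adj] (ω : V → Bool) : ℕ :=
  mex ((Finset.univ.filter (fun v => IsLegal G ω v)).attach.image
    (fun v => grundy G (move G ω v.1)))
termination_by weight ω
decreasing_by
  have hv := v.2
  rw [Finset.mem_filter] at hv
  exact weight_move_lt G hv.2

/-- One legal Toggle move transforms `ω` into `ω'`. -/
def Step (G : SimpleGraph V) [DecidableRel G.Adj] (ω ω' : V → Bool) : Prop :=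
  ∃ v, IsLegal G ω v ∧ ω' = move G ω v

/-- `ω'` is reachable from `ω` by a (possibly empty) sequence of legal moves. -/
def Reach (G : SimpleGraph V) [DecidableRel G.Adj] (ω ω' : V → Bool) : Prop :=
  Relation.ReflTransGen (Step G) ω ω'

/-- `v` is terminally unplayable at `ω`: unplayable at `ω` and at every position
reachable from `ω`. -/
def TerminallyUnplayable (G : SimpleGraph V) [DecidableRel G.Adj] (ω : V → Bool) (v : V) :
    Prop :=
  ∀ ω', Reach G ω ω' → ¬ IsLegal G ω' v

/-- `v` is penultimately unplayable for the initial position `ω₀`: at every position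
reachable from `ω₀`, after any legal move at a vertex `u ∈ N[v]`, the vertex `v` is
terminally unplayable. -/
def PenultimatelyUnplayableAt (G : SimpleGraph V) [DecidableRel G.Adj] (ω₀ : V → Bool)
    (v : V) : Prop :=
  ∀ ω', Reach G ω₀ ω' → ∀ u ∈ closedNbhd G v, IsLegal G ω' u →
    TerminallyUnplayable G (move G ω' u) v

/-- The position `ω₀` is penultimately unplayable if every vertex is. -/
def PenultimatelyUnplayable (G : SimpleGraph V) [DecidableRel G.Adj] (ω₀ : V → Bool) :
    Prop :=
  ∀ v, PenultimatelyUnplayableAt G ω₀ v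

/-- The path graph on `Fin n`, vertices `0, 1, …, n-1` in order. -/
def pathGraph (n : ℕ) : SimpleGraph (Fin n) :=
  SimpleGraph.fromRel (fun a b => (a : ℕ) + 1 = (b : ℕ))

instance (n : ℕ) : DecidableRel (pathGraph n).Adj := fun a b =>
  decidable_of_iff _ (SimpleGraph.fromRel_adj _ a b).symm

/-- The 2×m grid graph `L_{2,m}` (0-indexed rows and columns). -/
def gridGraph (m : ℕ) : SimpleGraph (Fin 2 × Fin m) :=
  SimpleGraph.fromRel (fun a b =>
    (a.1 = b.1 ∧ (a.2 : ℕ) + 1 = (b.2 : ℕ)) ∨ (a.2 = b.2 ∧ (a.1 : ℕ) + 1 = (b.1 : ℕ)))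

instance (m : ℕ) : DecidableRel (gridGraph m).Adj := fun a b =>
  decidable_of_iff _ (SimpleGraph.fromRel_adj _ a b).symm

/-- The generalized Petersen graph `P(m,k)`; the vertex `(0, i)` is the outer vertex
`u_i` and `(1, i)` is the inner vertex `w_i` (0-indexed). -/
def petersen (m k : ℕ) : SimpleGraph (Fin 2 × Fin m) :=
  SimpleGraph.fromRel (fun a b =>
    (a.1 = 0 ∧ b.1 = 0 ∧ ((a.2 : ℕ) + 1) % m = (b.2 : ℕ)) ∨
    (a.1 = 0 ∧ b.1 = 1 ∧ a.2 = b.2) ∨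
    (a.1 = 1 ∧ b.1 = 1 ∧ ((a.2 : ℕ) + k) % m = (b.2 : ℕ)))

instance (m k : ℕ) : DecidableRel (petersen m k).Adj := fun a b =>
  decidable_of_iff _ (SimpleGraph.fromRel_adj _ a b).symm

/-- The position on `P(m,k)` where every outer vertex has weight 1 and every inner
vertex has weight 0. -/
def P01 (m : ℕ) : Fin 2 × Fin m → Bool := fun p => decide (p.1 = 0)

/-- The position on `P(m,k)` where every inner vertex has weight 1 and every outer
vertex has weight 0. -/
def P10 (m : ℕ) : Fin 2 × Fin m → Bool := fun p => decide (p.1 = 1)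

/-- The position where every vertex has weight 1. -/
def P11 (m : ℕ) : Fin 2 × Fin m → Bool := fun _ => true

/-- The Toggle position `H_m` on `L_{2,m}` (columns 0-indexed): for `m ≠ 3`, weight 0
exactly at `(0,0), (0,m-1), (1,0), (1,1), (1,m-2), (1,m-1)`; for `m = 3`, weight 0
exactly at `(0,0), (0,2), (1,0), (1,2)`. -/
def Hpos (m : ℕ) : Fin 2 × Fin m → Bool := fun p =>
  if m = 3 then !(decide ((p.2 : ℕ) = 0 ∨ (p.2 : ℕ) = 2))
  else !(decide ((p.1 = 0 ∧ ((p.2 : ℕ) = 0 ∨ (p.2 : ℕ) = m - 1)) ∨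
                 (p.1 = 1 ∧ ((p.2 : ℕ) ≤ 1 ∨ m - 2 ≤ (p.2 : ℕ)))))

/-- The Toggle position `D_m` on `L_{2,m}` (columns 0-indexed): weight 0 exactly at
`(0,0), (0,m-2), (0,m-1), (1,0), (1,1), (1,m-1)`. -/
def Dpos (m : ℕ) : Fin 2 × Fin m → Bool := fun p =>
  !(decide ((p.1 = 0 ∧ ((p.2 : ℕ) = 0 ∨ m - 2 ≤ (p.2 : ℕ))) ∨
            (p.1 = 1 ∧ ((p.2 : ℕ) ≤ 1 ∨ (p.2 : ℕ) = m - 1))))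

/-- The Nimber of the position `H_m`. -/
noncomputable def GH (m : ℕ) : ℕ := grundy (gridGraph m) (Hpos m)

/-- The Nimber of the position `D_m`. -/
noncomputable def GD (m : ℕ) : ℕ := grundy (gridGraph m) (Dpos m)

/-- The cycle graph `C_m` on `Fin m`. -/
def cycleGraph (m : ℕ) : SimpleGraph (Fin m) :=
  SimpleGraph.fromRel (fun a b => ((a : ℕ) + 1) % m = (b : ℕ))

open scoped Classical in
/-- The Nimber of a position of Jacob's Ladder on `C_m`: a position is the `Finset` of
not-yet-removed vertices, and a move at a remaining vertex `v` removes all remaining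
vertices at distance at most 2 from `v` in `C_m`. -/
noncomputable def jlGrundy (m : ℕ) (S : Finset (Fin m)) : ℕ :=
  mex (S.attach.image (fun v =>
    jlGrundy m (S.filter (fun u => 2 < (cycleGraph m).dist v.1 u))))
termination_by S.card
decreasing_by
  apply Finset.card_lt_card
  rw [Finset.ssubset_iff_of_subset (Finset.filter_subset _ _)]
  exact ⟨v.1, v.2, by simp [SimpleGraph.dist_self]⟩

end Toggle

namespace Toggle

section Aux

variable {V : Type*} [Fintype V] [DecidableEq V]
variable (G : SimpleGraph V) [DecidableRel G.Adj] (e : V ≃ V)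
variable (he : ∀ a b, G.Adj (e a) (e b) ↔ G.Adj a b)

set_option linter.unusedSectionVars false

include he

lemma mem_closedNbhd_equiv (u v : V) :
    e u ∈ closedNbhd G (e v) ↔ u ∈ closedNbhd G v := by
  simp [closedNbhd, SimpleGraph.mem_neighborFinset, he, e.injective.eq_iff]

lemma closedNbhd_equiv (v : V) :
    closedNbhd G (e v) = (closedNbhd G v).map e.toEmbedding := by
  ext u
  simp only [Finset.mem_map, Equiv.coe_toEmbedding]
  constructor
  · intro hu
    refine ⟨e.symm u, ?_, by simp⟩
    have := (mem_closedNbhd_equiv G e he (e.symm u) v).mp (by simpa using hu)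
    exact this
  · rintro ⟨a, ha, rfl⟩
    exact (mem_closedNbhd_equiv G e he a v).mpr ha

lemma nbhdWeight_comp (ω : V → Bool) (v : V) :
    nbhdWeight G (ω ∘ e) v = nbhdWeight G ω (e v) := by
  unfold nbhdWeight
  rw [closedNbhd_equiv G e he, Finset.filter_map, Finset.card_map]
  rfl

lemma move_comp (ω : V → Bool) (v : V) :
    move G (ω ∘ e) v = (move G ω (e v)) ∘ e := by
  funext u
  simp only [move, Function.comp_apply]
  by_cases h : u ∈ closedNbhd G v
  · rw [if_pos h, if_pos ((mem_closedNbhd_equiv G e he u v).mpr h)]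
  · rw [if_neg h, if_neg (fun hc => h ((mem_closedNbhd_equiv G e he u v).mp hc))]

lemma isLegal_comp (ω : V → Bool) (v : V) :
    IsLegal G (ω ∘ e) v ↔ IsLegal G ω (e v) := by
  unfold IsLegal
  rw [move_comp G e he ω v, nbhdWeight_comp G e he (move G ω (e v)) v,
    nbhdWeight_comp G e he ω v]
  exact Iff.rfl

lemma weight_comp (ω : V → Bool) : weight (ω ∘ e) = weight ω := by
  unfold weight
  apply Finset.card_bij (fun a _ => e a)
  · intro a ha
    simp only [Finset.mem_filter, Finset.mem_univ, true_and] at ha ⊢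
    exact ha
  · intro a _ b _ hab
    exact e.injective hab
  · intro b hb
    simp only [Finset.mem_filter, Finset.mem_univ, true_and] at hb ⊢
    exact ⟨e.symm b, by simpa using hb, by simp⟩

lemma grundy_comp (ω : V → Bool) : grundy G (ω ∘ e) = grundy G ω := by
  have H : ∀ n : ℕ, ∀ ω : V → Bool, weight ω = n →
      grundy G (ω ∘ e) = grundy G ω := by
    intro n
    induction n using Nat.strong_induction_on with
    | _ n ih =>
      intro ω hω
      conv_lhs => rw [grundy]
      conv_rhs => rw [grundy]
      congr 1
      ext g
      simp only [Finset.mem_image, Finset.mem_attach, true_and, Subtype.exists,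
        Finset.mem_filter, Finset.mem_univ, true_and]
      constructor
      · rintro ⟨v, hv, rfl⟩
        have hv' : IsLegal G ω (e v) := (isLegal_comp G e he ω v).mp hv
        refine ⟨e v, hv', ?_⟩
        rw [move_comp G e he]
        exact (ih _ (hω ▸ weight_move_lt G hv') _ rfl).symm
      · rintro ⟨u, hu, rfl⟩
        have hv : IsLegal G (ω ∘ e) (e.symm u) :=
          (isLegal_comp G e he ω (e.symm u)).mpr (by simpa using hu)
        refine ⟨e.symm u, hv, ?_⟩
        rw [move_comp G e he ω (e.symm u)]
        simp only [Equiv.apply_symm_apply]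
        exact ih _ (hω ▸ weight_move_lt G hu) _ rfl
  exact H (weight ω) ω rfl

end Aux

lemma mex_mem01 (s : Finset ℕ) (h : ∀ x ∈ s, ∀ y ∈ s, x = y) :
    mex s ∈ ({0, 1} : Set ℕ) := by
  by_cases h0 : (0 : ℕ) ∈ s
  · have h1 : (1 : ℕ) ∉ s := fun h1 => by
      have := h _ h0 _ h1; omega
    have : mex s ≤ 1 := Nat.sInf_le h1
    simp only [Set.mem_insert_iff, Set.mem_singleton_iff]
    omega
  · have : mex s ≤ 0 := Nat.sInf_le h0
    simp only [Set.mem_insert_iff, Set.mem_singleton_iff]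
    omega

lemma shift_mod (m c : ℕ) [NeZero m] (x y t : Fin m) :
    (((x + t : Fin m) : ℕ) + c) % m = ((y + t : Fin m) : ℕ) ↔
      ((x : ℕ) + c) % m = (y : ℕ) := by
  have hy : ((y : ℕ) + (t : ℕ)) % m = ((y + t : Fin m) : ℕ) := by
    rw [Fin.add_def]
  have hx : ((x : ℕ) + (t : ℕ)) % m = ((x + t : Fin m) : ℕ) := by
    rw [Fin.add_def]
  rw [← hx, ← hy, Nat.mod_add_mod]
  have hre : (x : ℕ) + (t : ℕ) + c = (x : ℕ) + c + (t : ℕ) := by ring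
  rw [hre]
  have hym : (y : ℕ) % m = (y : ℕ) := Nat.mod_eq_of_lt y.isLt
  constructor
  · intro h
    have h' : ((x : ℕ) + c + (t : ℕ)) ≡ ((y : ℕ) + (t : ℕ)) [MOD m] := h
    have := Nat.ModEq.add_right_cancel' (t : ℕ) h'
    rw [Nat.ModEq, hym] at this
    exact this
  · intro h
    have h' : ((x : ℕ) + c) ≡ (y : ℕ) [MOD m] := by rw [Nat.ModEq, hym]; exact h
    exact Nat.ModEq.add_right (t : ℕ) h'

lemma rot_adj (m k : ℕ) [NeZero m] (t : Fin m) (a b : Fin 2 × Fin m) :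
    (petersen m k).Adj (a.1, a.2 + t) (b.1, b.2 + t) ↔ (petersen m k).Adj a b := by
  unfold petersen
  rw [SimpleGraph.fromRel_adj, SimpleGraph.fromRel_adj]
  have hne : (a.1, a.2 + t) ≠ (b.1, b.2 + t) ↔ a ≠ b := by
    constructor
    · intro h hab; exact h (by rw [hab])
    · intro h hab
      apply h
      simp only [Prod.mk.injEq] at hab
      obtain ⟨h1, h2⟩ := hab
      have h2' : a.2 = b.2 := by
        have := congrArg (fun z => z - t) h2
        simpa using this
      exact Prod.ext h1 h2'
  have key : ∀ p q : Fin 2 × Fin m,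
      ((p.1 = 0 ∧ q.1 = 0 ∧ ((p.2 + t : Fin m) : ℕ) % m + 0 = 0) → True) := fun _ _ _ => trivial
  clear key
  apply and_congr hne
  have heq : ∀ x y : Fin m, (x + t = y + t) ↔ x = y := by
    intro x y
    constructor
    · intro h
      have := congrArg (fun z => z - t) h
      simpa using this
    · intro h; rw [h]
  have h1 := shift_mod m 1 a.2 b.2 t
  have h1' := shift_mod m 1 b.2 a.2 t
  have hk1 := shift_mod m k a.2 b.2 t
  have hk1' := shift_mod m k b.2 a.2 t
  simp only [heq, h1, h1', hk1, hk1']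

lemma grundy_rotinvariant_mem01 (m k : ℕ) [NeZero m] (c : Fin 2)
    (ω : Fin 2 × Fin m → Bool) (hω : ∀ p, ω p = decide (p.1 = c)) :
    grundy (petersen m k) ω ∈ ({0, 1} : Set ℕ) := by
  rw [grundy]
  apply mex_mem01
  intro x hx y hy
  simp only [Finset.mem_image, Finset.mem_attach, true_and, Subtype.exists,
    Finset.mem_filter, Finset.mem_univ, true_and] at hx hy
  obtain ⟨v, hv, rfl⟩ := hx
  obtain ⟨w, hw, rfl⟩ := hy
  have hv1 : v.1 = c := by
    have := hv.1; rw [hω] at this; exact of_decide_eq_true this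
  have hw1 : w.1 = c := by
    have := hw.1; rw [hω] at this; exact of_decide_eq_true this
  set t : Fin m := w.2 - v.2 with ht
  let e : (Fin 2 × Fin m) ≃ (Fin 2 × Fin m) :=
    Equiv.prodCongr (Equiv.refl (Fin 2)) (Equiv.addRight t)
  have he : ∀ a b : Fin 2 × Fin m,
      (petersen m k).Adj (e a) (e b) ↔ (petersen m k).Adj a b := by
    intro a b
    exact rot_adj m k t a b
  have hωe : ω ∘ e = ω := by
    funext p
    have h1 : (e p).1 = p.1 := rfl
    rw [Function.comp_apply, hω, hω, h1]
  have hev : e v = w := by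
    have : v.2 + t = w.2 := by
      rw [ht, add_comm, sub_add_cancel]
    simp only [e, Equiv.prodCongr_apply, Equiv.coe_refl, Equiv.coe_addRight]
    rw [Prod.map]
    simp only [id_eq]
    rw [this, hv1]
    exact Prod.ext hw1.symm rfl
  calc grundy (petersen m k) (move (petersen m k) ω v)
      = grundy (petersen m k) (move (petersen m k) (ω ∘ e) v) := by rw [hωe]
    _ = grundy (petersen m k) ((move (petersen m k) ω (e v)) ∘ e) := by
        rw [move_comp (petersen m k) e he]
    _ = grundy (petersen m k) (move (petersen m k) ω (e v)) :=
        grundy_comp (petersen m k) e he _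
    _ = grundy (petersen m k) (move (petersen m k) ω w) := by rw [hev]

end Toggle


/-- for `m ≥ 3` and `0 < k ≤ ⌊(m-1)/2⌋`, the Nimbers of `P_{0,1}(m,k)`
and `P_{1,0}(m,k)` belong to `{0, 1}`. -/
theorem statement11 (m k : ℕ) (hm : 3 ≤ m) (hk : 0 < k) (hk' : k ≤ (m - 1) / 2) :
    Toggle.grundy (Toggle.petersen m k) (Toggle.P01 m) ∈ ({0, 1} : Set ℕ) ∧
    Toggle.grundy (Toggle.petersen m k) (Toggle.P10 m) ∈ ({0, 1} : Set ℕ) := by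
  haveI : NeZero m := ⟨by omega⟩
  constructor
  · exact Toggle.grundy_rotinvariant_mem01 m k 0 (Toggle.P01 m) (fun p => rfl)
  · exact Toggle.grundy_rotinvariant_mem01 m k 1 (Toggle.P10 m) (fun p => rfl)
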